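/- arXiv:math/0311019 — 2 statements merged into one kernel-verified Lean document; each statement's English description precedes it below -/
import Mathlib

section
/- Let A ⊂ M^{n+1} be a future-complete convex set with spacelike support plane, T its cosmological time and r the retraction as above. If (p_k) is a sequence of interior points of A converging to a boundary point p̄ ∈ ∂A, then T(p_k) → 0. -/
open Filter

/-- The Minkowski bilinear form on `ℝ^{n+1}`. -/
noncomputable def mink {n : ℕ} (v w : Fin (n+1) → ℝ) : ℝ :=
  (∑ i, v i * w i) - 2 * v 0 * w 0

/-- A future-directed timelike vector. -/
def TimelikeFuture {n : ℕ} (v : Fin (n+1) → ℝ) : Prop :=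
  mink v v < 0 ∧ 0 < v 0

/-- `q` lies in the causal past of `p`. -/
def InCausalPast {n : ℕ} (q p : Fin (n+1) → ℝ) : Prop :=
  mink (q - p) (q - p) ≤ 0 ∧ (q - p) 0 ≤ 0

/-- `r` maximizes the Lorentzian distance from `p` over `A ∩ (causal past of p)`. -/
def IsCTMaximizer {n : ℕ} (A : Set (Fin (n+1) → ℝ)) (p r : Fin (n+1) → ℝ) : Prop :=
  r ∈ frontier A ∧ InCausalPast r p ∧
    ∀ q ∈ A, InCausalPast q p →
      Real.sqrt (-(mink (p - q) (p - q))) ≤ Real.sqrt (-(mink (p - r) (p - r)))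

lemma mink_cont {n : ℕ} :
    Continuous (fun y : ((Fin (n+1) → ℝ) × (Fin (n+1) → ℝ)) => mink y.1 y.2) := by
  unfold mink
  fun_prop

lemma mink_sub_comm {n : ℕ} (a b : Fin (n+1) → ℝ) :
    mink (a - b) (a - b) = mink (b - a) (b - a) := by
  unfold mink
  rw [Finset.sum_congr rfl (fun i _ => show (a-b) i * (a-b) i = (b-a) i * (b-a) i by
    simp [Pi.sub_apply]; ring)]
  simp only [Pi.sub_apply]; ring

lemma mink_sub_left {n : ℕ} (a b u : Fin (n+1) → ℝ) :
    mink (a - b) u = mink a u - mink b u := by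
  unfold mink
  simp only [Pi.sub_apply, sub_mul, Finset.sum_sub_distrib]
  ring

lemma future_mem_interior {n : ℕ} {A : Set (Fin (n+1) → ℝ)}
    (hfut : ∀ p ∈ A, ∀ v : Fin (n+1) → ℝ, TimelikeFuture v → p + v ∈ A)
    {x v : Fin (n+1) → ℝ} (hx : x ∈ A) (hv : TimelikeFuture v) :
    x + v ∈ interior A := by
  set S : Set (Fin (n+1) → ℝ) := {y | TimelikeFuture (y - x)} with hS
  have hopen : IsOpen S := by
    have h1 : Continuous (fun y : Fin (n+1) → ℝ => mink (y - x) (y - x)) := by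
      have : Continuous (fun y : Fin (n+1) → ℝ => ((y - x), (y - x))) := by fun_prop
      exact mink_cont.comp this
    have h2 : Continuous (fun y : Fin (n+1) → ℝ => (y - x) 0) := by fun_prop
    have : S = (fun y : Fin (n+1) → ℝ => mink (y - x) (y - x)) ⁻¹' Set.Iio 0 ∩
        (fun y : Fin (n+1) → ℝ => (y - x) 0) ⁻¹' Set.Ioi 0 := by
      ext y; simp [hS, TimelikeFuture, and_comm]
    rw [this]
    exact (isOpen_Iio.preimage h1).inter (isOpen_Ioi.preimage h2)
  have hsub : S ⊆ A := by
    intro y hy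
    have := hfut x hx (y - x) hy
    simpa using this
  have : x + v ∈ S := by simp [hS, Set.mem_setOf_eq, add_sub_cancel_left, hv]
  exact interior_maximal hsub hopen this


set_option maxHeartbeats 1000000 in
/-- The cosmological time tends to `0` at the boundary: if `A` is a future-complete
convex set with spacelike support plane, `T(p) = √(-⟨p - r(p), p - r(p)⟩)` its
cosmological time (where `r(p)` is the Lorentz-distance maximizer), and `(p_k)` is a
sequence of interior points of `A` converging to a boundary point `p̄ ∈ ∂A`, then
`T(p_k) → 0`. -/
theorem cosmological_time_tendsto_zero_at_boundary {n : ℕ}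
    (A : Set (Fin (n+1) → ℝ)) (hconv : Convex ℝ A) (hclosed : IsClosed A)
    (hfut : ∀ p ∈ A, ∀ v : Fin (n+1) → ℝ, TimelikeFuture v → p + v ∈ A)
    (hsupp : ∃ q u : Fin (n+1) → ℝ, TimelikeFuture u ∧ ∀ x ∈ A, mink (x - q) u ≤ 0)
    (p : ℕ → (Fin (n+1) → ℝ)) (hp : ∀ k, p k ∈ interior A)
    (pbar : Fin (n+1) → ℝ) (hpbar : pbar ∈ frontier A)
    (hlim : Tendsto p atTop (nhds pbar))
    (r : ℕ → (Fin (n+1) → ℝ)) (hr : ∀ k, IsCTMaximizer A (p k) (r k)) :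
    Tendsto (fun k => Real.sqrt (-(mink (p k - r k) (p k - r k)))) atTop (nhds 0) := by
  obtain ⟨q, u, hu, hA⟩ := hsupp
  have hrA : ∀ k, r k ∈ A := by
    intro k
    have h := frontier_subset_closure ((hr k).1)
    rwa [hclosed.closure_eq] at h
  set w : ℕ → (Fin (n+1) → ℝ) := fun k => p k - r k with hwdef
  have hw0 : ∀ k, 0 ≤ w k 0 := by
    intro k
    have h := (hr k).2.1.2
    have hval : w k 0 = p k 0 - r k 0 := rfl
    have h2 : (r k - p k) 0 = r k 0 - p k 0 := rfl
    rw [h2] at h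
    linarith
  have hwt : ∀ k, mink (w k) (w k) ≤ 0 := by
    intro k
    have h := (hr k).2.1.1
    rw [mink_sub_comm] at h
    exact h
  -- the constant c = 2 u₀ - √2 √(∑ uᵢ²) is positive
  set su : ℝ := Real.sqrt (∑ i, u i ^ 2) with hsu
  set c : ℝ := 2 * u 0 - Real.sqrt 2 * su with hcdef
  have hsum_u : (∑ i, u i ^ 2) < 2 * u 0 ^ 2 := by
    have := hu.1
    unfold mink at this
    have h2 : (∑ i, u i * u i) = ∑ i, u i ^ 2 := by
      apply Finset.sum_congr rfl; intro i _; ring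
    rw [h2] at this; nlinarith
  have hsu_lt : su < Real.sqrt 2 * u 0 := by
    have h1 : su < Real.sqrt (2 * u 0 ^ 2) := by
      apply Real.sqrt_lt_sqrt (Finset.sum_nonneg fun i _ => sq_nonneg _) hsum_u
    calc su < Real.sqrt (2 * u 0 ^ 2) := h1
      _ = Real.sqrt 2 * u 0 := by
        rw [Real.sqrt_mul (by norm_num), Real.sqrt_sq hu.2.le]
  have hc : 0 < c := by
    have h2 : Real.sqrt 2 * Real.sqrt 2 = 2 := Real.mul_self_sqrt (by norm_num)
    have hs2 : (0:ℝ) < Real.sqrt 2 := Real.sqrt_pos.mpr (by norm_num)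
    have : Real.sqrt 2 * su < Real.sqrt 2 * (Real.sqrt 2 * u 0) := by
      exact mul_lt_mul_of_pos_left hsu_lt hs2
    rw [← mul_assoc, h2] at this
    simp only [hcdef]; linarith
  -- Cauchy–Schwarz-type bound: mink (w k) u ≤ - (w k 0) * c
  have hws : ∀ k, Real.sqrt (∑ i, w k i ^ 2) ≤ Real.sqrt 2 * w k 0 := by
    intro k
    have h := hwt k
    unfold mink at h
    have h2 : (∑ i, w k i * w k i) = ∑ i, w k i ^ 2 := by
      apply Finset.sum_congr rfl; intro i _; ring
    rw [h2] at h
    have hle : (∑ i, w k i ^ 2) ≤ 2 * w k 0 ^ 2 := by nlinarith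
    calc Real.sqrt (∑ i, w k i ^ 2) ≤ Real.sqrt (2 * w k 0 ^ 2) :=
          Real.sqrt_le_sqrt hle
      _ = Real.sqrt 2 * w k 0 := by
          rw [Real.sqrt_mul (by norm_num), Real.sqrt_sq (hw0 k)]
  have hkey : ∀ k, mink (w k) u ≤ -(w k 0 * c) := by
    intro k
    have hcs : (∑ i, w k i * u i) ≤ Real.sqrt (∑ i, w k i ^ 2) * su := by
      have h := Finset.sum_mul_sq_le_sq_mul_sq Finset.univ (fun i => w k i) (fun i => u i)
      have habs : (∑ i, w k i * u i) ≤ |∑ i, w k i * u i| := le_abs_self _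
      have h3 : |∑ i, w k i * u i| = Real.sqrt ((∑ i, w k i * u i) ^ 2) :=
        (Real.sqrt_sq_eq_abs _).symm
      calc (∑ i, w k i * u i) ≤ Real.sqrt ((∑ i, w k i * u i) ^ 2) := by
            rw [← h3]; exact habs
        _ ≤ Real.sqrt ((∑ i, w k i ^ 2) * ∑ i, u i ^ 2) := Real.sqrt_le_sqrt h
        _ = Real.sqrt (∑ i, w k i ^ 2) * su := by
            rw [Real.sqrt_mul (Finset.sum_nonneg fun i _ => sq_nonneg _)]
    have hsu0 : 0 ≤ su := Real.sqrt_nonneg _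
    have h4 : (∑ i, w k i * u i) ≤ Real.sqrt 2 * w k 0 * su := by
      calc (∑ i, w k i * u i) ≤ Real.sqrt (∑ i, w k i ^ 2) * su := hcs
        _ ≤ Real.sqrt 2 * w k 0 * su := mul_le_mul_of_nonneg_right (hws k) hsu0
    unfold mink
    simp only [hcdef]
    nlinarith [hw0 k]
  -- lower bound on mink (w k) u from the support plane
  have hlow : ∀ k, mink (p k - q) u ≤ mink (w k) u := by
    intro k
    have h := hA (r k) (hrA k)
    have heq : r k - q = (p k - q) - w k := by
      simp only [hwdef]; ext i; simp only [Pi.sub_apply]; ring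
    rw [heq, mink_sub_left] at h
    linarith
  -- bound on w k 0
  have htend_mq : Tendsto (fun k => -(mink (p k - q) u)) atTop
      (nhds (-(mink (pbar - q) u))) := by
    have hcont : Continuous (fun y : Fin (n+1) → ℝ => mink (y - q) u) := by
      have h1 : Continuous (fun y : Fin (n+1) → ℝ => ((y - q), u)) := by fun_prop
      exact mink_cont.comp h1
    exact ((hcont.tendsto pbar).comp hlim).neg
  obtain ⟨B, hB⟩ := htend_mq.bddAbove_range
  have hB' : ∀ k, -(mink (p k - q) u) ≤ B := fun k => hB ⟨k, rfl⟩
  have hw0B : ∀ k, w k 0 ≤ B / c := by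
    intro k
    have h1 := hlow k
    have h2 := hkey k
    have h3 := hB' k
    rw [le_div_iff₀ hc]
    nlinarith
  -- bound on ‖r k‖
  have hwnorm : ∀ k, ‖w k‖ ≤ Real.sqrt 2 * (B / c) := by
    intro k
    have hnn : 0 ≤ Real.sqrt 2 * (B / c) :=
      mul_nonneg (Real.sqrt_nonneg _) (le_trans (hw0 k) (hw0B k))
    rw [pi_norm_le_iff_of_nonneg hnn]
    intro i
    have h1 : w k i ^ 2 ≤ ∑ j, w k j ^ 2 :=
      Finset.single_le_sum (fun j _ => sq_nonneg (w k j)) (Finset.mem_univ i)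
    have h2 : |w k i| ≤ Real.sqrt (∑ j, w k j ^ 2) := by
      rw [← Real.sqrt_sq_eq_abs]
      exact Real.sqrt_le_sqrt h1
    rw [Real.norm_eq_abs]
    calc |w k i| ≤ Real.sqrt (∑ j, w k j ^ 2) := h2
      _ ≤ Real.sqrt 2 * w k 0 := hws k
      _ ≤ Real.sqrt 2 * (B / c) :=
          mul_le_mul_of_nonneg_left (hw0B k) (Real.sqrt_nonneg _)
  have htendp : Tendsto (fun k => ‖p k‖) atTop (nhds ‖pbar‖) :=
    (continuous_norm.tendsto pbar).comp hlim
  obtain ⟨R, hR⟩ := htendp.bddAbove_range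
  have hR' : ∀ k, ‖p k‖ ≤ R := fun k => hR ⟨k, rfl⟩
  set M : ℝ := R + Real.sqrt 2 * (B / c) with hMdef
  have hball : ∀ k, r k ∈ Metric.closedBall (0 : Fin (n+1) → ℝ) M := by
    intro k
    rw [Metric.mem_closedBall, dist_zero_right]
    have heq : r k = p k - w k := by
      simp only [hwdef]; ext i; simp only [Pi.sub_apply]; ring
    rw [heq]
    calc ‖p k - w k‖ ≤ ‖p k‖ + ‖w k‖ := norm_sub_le _ _
      _ ≤ R + Real.sqrt 2 * (B / c) := add_le_add (hR' k) (hwnorm k)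
  -- subsequence argument
  apply tendsto_of_subseq_tendsto
  intro ns hns
  obtain ⟨rbar, _, ms, hms_mono, hms_tend⟩ :=
    (isCompact_closedBall (0 : Fin (n+1) → ℝ) M).tendsto_subseq
      (x := fun i => r (ns i)) (fun i => hball (ns i))
  refine ⟨ms, ?_⟩
  have hp' : Tendsto (fun i => p (ns (ms i))) atTop (nhds pbar) :=
    hlim.comp (hns.comp hms_mono.tendsto_atTop)
  have hr' : Tendsto (fun i => r (ns (ms i))) atTop (nhds rbar) := hms_tend
  have hrbarF : rbar ∈ frontier A :=
    isClosed_frontier.mem_of_tendsto hr' (Eventually.of_forall fun i => (hr _).1)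
  have hrbarA : rbar ∈ A := by
    have h := frontier_subset_closure hrbarF
    rwa [hclosed.closure_eq] at h
  set L : ℝ := mink (pbar - rbar) (pbar - rbar) with hLdef
  have hsub : Tendsto (fun i => p (ns (ms i)) - r (ns (ms i))) atTop
      (nhds (pbar - rbar)) := hp'.sub hr'
  have hL : Tendsto (fun i => mink (p (ns (ms i)) - r (ns (ms i)))
      (p (ns (ms i)) - r (ns (ms i)))) atTop (nhds L) := by
    have hcomp : ∀ j : Fin (n+1), Tendsto (fun i => (p (ns (ms i)) - r (ns (ms i))) j)
        atTop (nhds ((pbar - rbar) j)) := fun j =>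
      ((continuous_apply j).tendsto _).comp hsub
    simp only [hLdef]
    unfold mink
    exact Tendsto.sub
      (tendsto_finset_sum _ (fun j _ => (hcomp j).mul (hcomp j)))
      ((tendsto_const_nhds.mul (hcomp 0)).mul (hcomp 0))
  have hLnonneg : 0 ≤ L := by
    by_contra hneg
    push_neg at hneg
    have h0' : Tendsto (fun i => (p (ns (ms i)) - r (ns (ms i))) 0) atTop
        (nhds ((pbar - rbar) 0)) := ((continuous_apply 0).tendsto _).comp hsub
    have h0 : 0 ≤ (pbar - rbar) 0 :=
      ge_of_tendsto' h0' (fun i => hw0 (ns (ms i)))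
    have hne : (pbar - rbar) 0 ≠ 0 := by
      intro hz
      have : 0 ≤ L := by
        simp only [hLdef]
        unfold mink
        rw [hz]
        have : (0:ℝ) ≤ ∑ i, (pbar - rbar) i * (pbar - rbar) i :=
          Finset.sum_nonneg fun i _ => mul_self_nonneg _
        linarith
      linarith
    have htl : TimelikeFuture (pbar - rbar) := ⟨hneg, lt_of_le_of_ne h0 (Ne.symm hne)⟩
    have hint : pbar ∈ interior A := by
      have := future_mem_interior hfut hrbarA htl
      simpa using this
    rw [hclosed.frontier_eq] at hpbar
    exact hpbar.2 hint
  have hfin : Tendsto (fun i => Real.sqrt (-(mink (p (ns (ms i)) - r (ns (ms i)))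
      (p (ns (ms i)) - r (ns (ms i)))))) atTop (nhds (Real.sqrt (-L))) :=
    (Real.continuous_sqrt.tendsto _).comp hL.neg
  have hz : Real.sqrt (-L) = 0 := Real.sqrt_eq_zero'.mpr (by linarith)
  rw [hz] at hfin
  exact hfin
end

section
/- Let c : [0,1] → H^n be a geodesic path in hyperbolic space and v : [0,1] → ℝ^{n+1} a measurable unit spacelike field along c with ⟨v(t), c(t)⟩ = 0, ⟨v(t),v(t)⟩ = 1 and ⟨v(t), ċ(t)⟩ > 0 for (almost all) t. Then ⟨c(0), v(t)⟩ < 0 and ⟨c(1), v(t)⟩ > 0 for (almost all) t ∈ (0,1); hence the hyperplane v(t)^⊥ separates c(0) from c(1). -/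
open Filter Topology Real

lemma mink_comm {n : ℕ} (v w : Fin (n+1) → ℝ) : mink v w = mink w v := by
  simp only [mink, mul_comm (v _)]
  ring

lemma mink_smul_add_smul {n : ℕ} (v x y : Fin (n+1) → ℝ) (a b : ℝ) :
    mink v (a • x + b • y) = a * mink v x + b * mink v y := by
  simp only [mink, Pi.add_apply, Pi.smul_apply, smul_eq_mul, mul_add, Finset.sum_add_distrib,
    mul_left_comm (v _), ← Finset.mul_sum]
  ring

lemma HasDerivAt.mink_const_left {n : ℕ} (v : Fin (n+1) → ℝ) {c : ℝ → Fin (n+1) → ℝ}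
    {c' : Fin (n+1) → ℝ} {t : ℝ} (hc : HasDerivAt c c' t) :
    HasDerivAt (fun u => mink v (c u)) (mink v c') t := by
  have hcoord : ∀ i, HasDerivAt (fun u => c u i) (c' i) t := hasDerivAt_pi.mp hc
  have hsum : HasDerivAt (fun u => ∑ i, v i * c u i) (∑ i, v i * c' i) t :=
    HasDerivAt.fun_sum fun i _ => (hcoord i).const_mul (v i)
  simpa only [mink, mul_assoc] using hsum.fun_sub ((hcoord 0).const_mul (2 * v 0))

lemma HasDerivAt.eventually_lt_right {f : ℝ → ℝ} {f' t : ℝ} (hf : HasDerivAt f f' t)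
    (hf' : 0 < f') : ∀ᶠ u in 𝓝[>] t, f t < f u := by
  have hslope : ∀ᶠ u in 𝓝[>] t, 0 < slope f t u :=
    ((hasDerivAt_iff_tendsto_slope.mp hf).mono_left (nhdsGT_le_nhdsNE t)).eventually
      (eventually_gt_nhds hf')
  filter_upwards [hslope, self_mem_nhdsWithin] with u hu (htu : t < u)
  rw [slope_def_field, div_pos_iff_of_pos_right (sub_pos.mpr htu)] at hu
  linarith

lemma cosh_mul_eq_mul_sinh_sub_of_eq_zero {a b A B : ℝ} (ha : cosh a * A + sinh a * B = 0) :
    cosh a * (cosh b * A + sinh b * B) = B * sinh (b - a) := by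
  rw [sinh_sub]
  linear_combination cosh b * ha

theorem normal_density_separates_endpoints_general {n : ℕ}
    (c0 w : Fin (n+1) → ℝ)
    (s : ℝ → ℝ) (hs : StrictMonoOn s (Set.Icc (0:ℝ) 1))
    (c : ℝ → Fin (n+1) → ℝ)
    (hc : c = fun u => Real.cosh (s u) • c0 + Real.sinh (s u) • w)
    (t : ℝ) (ht : t ∈ Set.Ioo (0:ℝ) 1)
    (cdot : Fin (n+1) → ℝ) (hder : HasDerivAt c cdot t)
    (v : Fin (n+1) → ℝ)
    (hv1 : mink v (c t) = 0) (hv3 : 0 < mink v cdot) :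
    mink (c 0) v < 0 ∧ 0 < mink (c 1) v := by
  have hlin (u : ℝ) : mink v (c u) = cosh (s u) * mink v c0 + sinh (s u) * mink v w := by
    rw [hc]; exact mink_smul_add_smul v c0 w _ _
  have hsign (u : ℝ) : cosh (s t) * mink v (c u) = mink v w * sinh (s u - s t) := by
    rw [hlin]; exact cosh_mul_eq_mul_sinh_sub_of_eq_zero (hlin t ▸ hv1)
  obtain ⟨u, hpos, htu, hu1⟩ :=
    (((hder.mink_const_left v).eventually_lt_right hv3).and (Ioo_mem_nhdsGT ht.2)).exists
  rw [hv1] at hpos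
  have hIcc : ∀ x ∈ Set.Ioo (0:ℝ) 1, x ∈ Set.Icc (0:ℝ) 1 := fun _ => Set.mem_Icc_of_Ioo
  have h0 : s 0 < s t := hs (Set.left_mem_Icc.2 zero_le_one) (hIcc t ht) ht.1
  have h1 : s t < s 1 := hs (hIcc t ht) (Set.right_mem_Icc.2 zero_le_one) ht.2
  have hu : s t < s u := hs (hIcc t ht) (hIcc u ⟨ht.1.trans htu, hu1⟩) htu
  have hB : 0 < mink v w := by
    refine pos_of_mul_pos_left ?_ (sinh_pos_iff.2 (sub_pos.2 hu)).le
    rw [← hsign]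
    exact mul_pos (cosh_pos _) hpos
  rw [mink_comm, mink_comm (c 1)]
  constructor
  · refine neg_of_mul_neg_right ?_ (cosh_pos (s t)).le
    rw [hsign]
    exact mul_neg_of_pos_of_neg hB (sinh_neg_iff.2 (by linarith))
  · refine pos_of_mul_pos_right ?_ (cosh_pos (s t)).le
    rw [hsign]
    exact mul_pos hB (sinh_pos_iff.2 (by linarith))

/-- Let `c : [0,1] → H^n` be a (nonconstant, increasingly parametrized) geodesic path in
hyperbolic space, written `c(t) = cosh(s(t))·c₀ + sinh(s(t))·w` with `c₀ ∈ H^n`,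
`w` a unit tangent vector at `c₀`, and `s` strictly increasing with `s(0) = 0`.
If `v` is a unit spacelike vector at time `t ∈ (0,1)` with `⟨v, c(t)⟩ = 0`,
`⟨v, v⟩ = 1` and `⟨v, ċ(t)⟩ > 0`, then `⟨c(0), v⟩ < 0` and `⟨c(1), v⟩ > 0`; hence the
hyperplane `v^⊥` separates `c(0)` from `c(1)`. -/
theorem normal_density_separates_endpoints {n : ℕ}
    (c0 w : Fin (n+1) → ℝ)
    (hc0 : mink c0 c0 = -1) (hc00 : 0 < c0 0)
    (hw : mink w w = 1) (hortho : mink c0 w = 0)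
    (s : ℝ → ℝ) (hs : StrictMonoOn s (Set.Icc (0:ℝ) 1)) (hs0 : s 0 = 0)
    (c : ℝ → Fin (n+1) → ℝ)
    (hc : c = fun u => Real.cosh (s u) • c0 + Real.sinh (s u) • w)
    (t : ℝ) (ht : t ∈ Set.Ioo (0:ℝ) 1)
    (cdot : Fin (n+1) → ℝ) (hder : HasDerivAt c cdot t)
    (v : Fin (n+1) → ℝ)
    (hv1 : mink v (c t) = 0) (hv2 : mink v v = 1) (hv3 : 0 < mink v cdot) :
    mink (c 0) v < 0 ∧ 0 < mink (c 1) v :=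
  normal_density_separates_endpoints_general c0 w s hs c hc t ht cdot hder v hv1 hv3
end
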